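/- arXiv:1602.03392 — 5 statements merged into one kernel-verified Lean document; each statement's English description precedes it below -/
import Mathlib

section
/- The cycle graph C5 on five vertices is irreducible. -/
/-- `x ≈ y`: equal or adjacent. A reduction of `G` is a non-surjective map `f`
with `f x ≈ x` for all `x`, and `x ≈ y → f x ≈ f y`. -/
def SimpleGraph.IsReduction {V : Type*} (G : SimpleGraph V) (f : V → V) : Prop :=
  ¬ Function.Surjective f ∧
  (∀ x, f x = x ∨ G.Adj (f x) x) ∧
  (∀ x y, (x = y ∨ G.Adj x y) → (f x = f y ∨ G.Adj (f x) (f y)))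

/-- A graph is reducible if it admits a reduction. -/
def SimpleGraph.Reducible {V : Type*} (G : SimpleGraph V) : Prop :=
  ∃ f : V → V, G.IsReduction f

/-- The cycle graph on `ZMod n`. -/
def cycleGraph (n : ℕ) : SimpleGraph (ZMod n) :=
  SimpleGraph.fromRel (fun x y => y = x + 1)

/-- Abbreviation for adjacency in `cycleGraph 5`, unfolded. -/
def adj5 (x y : ZMod 5) : Prop := x ≠ y ∧ (y = x + 1 ∨ x = y + 1)

lemma adj5_iff (x y : ZMod 5) : (cycleGraph 5).Adj x y ↔ adj5 x y := by
  simp [cycleGraph, SimpleGraph.fromRel_adj, adj5]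

instance (x y : ZMod 5) : Decidable (adj5 x y) := by unfold adj5; infer_instance

lemma ne_add_one : ∀ x : ZMod 5, x ≠ x + 1 := by decide

lemma key : ∀ a b c d e : ZMod 5,
    (a = 0 ∨ adj5 a 0) → (b = 1 ∨ adj5 b 1) → (c = 2 ∨ adj5 c 2) →
    (d = 3 ∨ adj5 d 3) → (e = 4 ∨ adj5 e 4) →
    (a = b ∨ adj5 a b) → (b = c ∨ adj5 b c) → (c = d ∨ adj5 c d) →
    (d = e ∨ adj5 d e) → (e = a ∨ adj5 e a) →
    (∃ v : ZMod 5, a ≠ v ∧ b ≠ v ∧ c ≠ v ∧ d ≠ v ∧ e ≠ v) → False := by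
  decide

theorem c5_irreducible : ¬ (cycleGraph 5).Reducible := by
  rintro ⟨f, hns, h1, h2⟩
  have hv : ∀ x : ZMod 5, f x = x ∨ adj5 (f x) x := fun x => (h1 x).imp id (adj5_iff _ _).mp
  have he : ∀ x : ZMod 5, f x = f (x + 1) ∨ adj5 (f x) (f (x + 1)) := fun x =>
    (h2 x (x + 1) (Or.inr ((adj5_iff _ _).mpr ⟨ne_add_one x, Or.inl rfl⟩))).imp id
      (adj5_iff _ _).mp
  simp only [Function.Surjective, not_forall] at hns
  obtain ⟨v, hvv⟩ := hns
  rw [not_exists] at hvv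
  exact key (f 0) (f 1) (f 2) (f 3) (f 4) (hv 0) (hv 1) (hv 2) (hv 3) (hv 4)
    (he 0) (he 1) (he 2) (he 3) (he 4)
    ⟨v, fun h => hvv 0 h, fun h => hvv 1 h, fun h => hvv 2 h, fun h => hvv 3 h,
      fun h => hvv 4 h⟩
end

section
/- For every n ≥ 5, the cycle graph Cn on n vertices is irreducible. -/
theorem cycle_irreducible_of_ge_five (n : ℕ) (hn : 5 ≤ n) :
    ¬ (cycleGraph n).Reducible := by
  haveI : NeZero n := ⟨by omega⟩
  rintro ⟨f, hsur, h2, h3⟩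
  have hcast : ∀ k : ℕ, 0 < k → k < n → (k : ZMod n) ≠ 0 := by
    intro k hk1 hk2 h
    rw [ZMod.natCast_eq_zero_iff] at h
    exact absurd (Nat.le_of_dvd hk1 h) (by omega)
  have h1 : (1 : ZMod n) ≠ 0 := by
    have := hcast 1 (by omega) (by omega); simpa using this
  have h2z : (2 : ZMod n) ≠ 0 := by
    have := hcast 2 (by omega) (by omega); simpa using this
  have h3z : (3 : ZMod n) ≠ 0 := by
    have := hcast 3 (by omega) (by omega); simpa using this
  have h4z : (4 : ZMod n) ≠ 0 := by
    have := hcast 4 (by omega) (by omega); simpa using this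
  have hne1 : (-1 : ZMod n) ≠ 1 := fun h => h2z (by linear_combination -h)
  have hne2 : (-1 : ZMod n) ≠ 0 := fun h => h1 (by linear_combination -h)
  have hne3 : (0 : ZMod n) ≠ 1 := fun h => h1 h.symm
  have hadj : ∀ x y : ZMod n, (cycleGraph n).Adj x y ↔ x ≠ y ∧ (y = x + 1 ∨ x = y + 1) := by
    intro x y
    constructor
    · intro h; rw [cycleGraph, SimpleGraph.fromRel_adj] at h; tauto
    · intro h; rw [cycleGraph, SimpleGraph.fromRel_adj]; tauto
  set e : ZMod n → ZMod n := fun x => f x - x with he_def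
  have hfe : ∀ x, f x = x + e x := by intro x; simp [he_def]
  have he : ∀ x, e x = -1 ∨ e x = 0 ∨ e x = 1 := by
    intro x
    rcases h2 x with h | h
    · right; left; simp [he_def, h]
    · rw [hadj] at h
      rcases h.2 with h' | h'
      · left; show f x - x = -1; linear_combination -h'
      · right; right; show f x - x = 1; linear_combination h'
  have hstep : ∀ x : ZMod n, e (x + 1) - e x = -1 ∨ e (x + 1) - e x = 0 ∨
      e (x + 1) - e x = -2 := by
    intro x
    have hx : (cycleGraph n).Adj x (x + 1) := by
      rw [hadj]
      refine ⟨?_, Or.inl rfl⟩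
      intro h
      exact h1 (by linear_combination -h)
    rcases h3 x (x + 1) (Or.inr hx) with h | h
    · left
      rw [hfe, hfe] at h
      linear_combination -h
    · rw [hadj, hfe, hfe] at h
      rcases h.2 with h' | h'
      · right; left; linear_combination h'
      · right; right; linear_combination -h'
  set r : ZMod n → ℕ := fun x => if e x = 1 then 2 else if e x = 0 then 1 else 0 with hr_def
  have hr : ∀ x : ZMod n, r (x + 1) ≤ r x := by
    intro x
    rcases he x with ha | ha | ha <;> rcases he (x + 1) with hb | hb | hb <;>
      rcases hstep x with hd | hd | hd <;>
      rw [ha, hb] at hd <;>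
      simp only [hr_def, ha, hb] <;>
      first
        | (exfalso; apply h1; linear_combination hd)
        | (exfalso; apply h1; linear_combination -hd)
        | (exfalso; apply h2z; linear_combination hd)
        | (exfalso; apply h2z; linear_combination -hd)
        | (exfalso; apply h3z; linear_combination hd)
        | (exfalso; apply h3z; linear_combination -hd)
        | (exfalso; apply h4z; linear_combination hd)
        | (exfalso; apply h4z; linear_combination -hd)
        | simp [hne1, hne2, hne3, h1]
  have hrk : ∀ (x : ZMod n) (k : ℕ), r (x + k) ≤ r x := by
    intro x k
    induction k with
    | zero => simp
    | succ m ih =>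
      calc r (x + (m + 1 : ℕ)) = r ((x + m) + 1) := by push_cast; ring_nf
        _ ≤ r (x + m) := hr _
        _ ≤ r x := ih
  have hreq : ∀ x : ZMod n, r (x + 1) = r x := by
    intro x
    refine le_antisymm (hr x) ?_
    have := hrk (x + 1) (n - 1)
    have hn1 : ((n - 1 : ℕ) : ZMod n) = -1 := by
      have h' : ((n - 1 : ℕ) : ZMod n) = (n : ZMod n) - 1 := by
        rw [Nat.cast_sub (by omega)]; norm_num
      simp [h']
    rw [hn1] at this
    simpa using this
  have heeq : ∀ x : ZMod n, e (x + 1) = e x := by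
    intro x
    have hre := hreq x
    simp only [hr_def] at hre
    rcases he x with ha | ha | ha <;> rcases he (x + 1) with hb | hb | hb <;>
      rw [hb, ha] at hre ⊢ <;>
      first
        | rfl
        | (simp [hne1, hne2, hne3, h1] at hre)
  have hconstN : ∀ k : ℕ, e (k : ZMod n) = e 0 := by
    intro k
    induction k with
    | zero => simp
    | succ m ih => push_cast; rw [heeq]; exact ih
  have hconst : ∀ y : ZMod n, e y = e 0 := by
    intro y
    have := hconstN y.val
    rwa [ZMod.natCast_zmod_val] at this
  apply hsur
  intro z
  refine ⟨z - e 0, ?_⟩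
  have h5 : f (z - e 0) = (z - e 0) + e (z - e 0) := hfe _
  rw [h5, hconst (z - e 0)]
  ring
end

section
/- Every finite tree with at least two vertices is reducible. -/
lemma tree_exists_leaf {V : Type*} [Fintype V] (G : SimpleGraph V)
    (htree : G.IsTree) (hcard : 2 ≤ Fintype.card V) :
    ∃ v u, G.Adj v u ∧ ∀ y, G.Adj v y → y = u := by
  classical
  have hdegpos : ∀ v : V, 0 < G.degree v := by
    intro v
    obtain ⟨w, hw⟩ := Fintype.exists_ne_of_one_lt_card (by omega) v
    obtain ⟨p⟩ := htree.isConnected v w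
    rw [G.degree_pos_iff_exists_adj]
    cases p with
    | nil => exact absurd rfl hw
    | cons h _ => exact ⟨_, h⟩
  have hsum : ∑ v, G.degree v = 2 * G.edgeFinset.card :=
    G.sum_degrees_eq_twice_card_edges
  have hedge : G.edgeFinset.card + 1 = Fintype.card V := htree.card_edgeFinset
  have hdeg1 : ∃ v : V, G.degree v = 1 := by
    by_contra h
    push_neg at h
    have h2 : ∀ v : V, 2 ≤ G.degree v := by
      intro v
      have := hdegpos v
      have := h v
      omega
    have : 2 * Fintype.card V ≤ ∑ v, G.degree v := by
      calc 2 * Fintype.card V = ∑ _v : V, 2 := by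
            rw [Finset.sum_const, Finset.card_univ]; ring
        _ ≤ ∑ v, G.degree v := Finset.sum_le_sum fun v _ => h2 v
    omega
  obtain ⟨v, hv⟩ := hdeg1
  have : (G.neighborFinset v).card = 1 := hv
  obtain ⟨u, hu⟩ := Finset.card_eq_one.mp this
  refine ⟨v, u, ?_, ?_⟩
  · have : u ∈ G.neighborFinset v := hu ▸ Finset.mem_singleton_self u
    exact (G.mem_neighborFinset v u).mp this
  · intro y hy
    have : y ∈ G.neighborFinset v := (G.mem_neighborFinset v y).mpr hy
    rw [hu, Finset.mem_singleton] at this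
    exact this

theorem tree_reducible {V : Type*} [Fintype V] (G : SimpleGraph V)
    (htree : G.IsTree) (hcard : 2 ≤ Fintype.card V) :
    G.Reducible := by
  classical
  obtain ⟨v, u, hadj, huniq⟩ := tree_exists_leaf G htree hcard
  have hvu : v ≠ u := G.ne_of_adj hadj
  refine ⟨fun x => if x = v then u else x, ?_, ?_, ?_⟩
  · intro hsurj
    obtain ⟨x, hx⟩ := hsurj v
    by_cases hxv : x = v
    · simp only [hxv, if_pos rfl] at hx; exact hvu hx.symm
    · simp only [if_neg hxv] at hx; exact hxv hx
  · intro x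
    by_cases hxv : x = v
    · subst hxv; right; simpa using hadj.symm
    · left; simp [hxv]
  · intro x y hxy
    rcases hxy with rfl | hxy
    · left; rfl
    by_cases hx : x = v <;> by_cases hy : y = v
    · subst hx; subst hy; exact absurd hxy (G.irrefl)
    · subst hx
      have : y = u := huniq y hxy
      left; simp [hy, this]
    · subst hy
      have : x = u := huniq x hxy.symm
      left; simp [hx, this]
    · right; simpa [hx, hy] using hxy
end

section
/- Every connected finite simple graph with exactly 2, 3, or 4 vertices is reducible. -/
/-!
A reduction can be built from a clique `K ≠ V` that dominates `G`: send every vertex to a vertex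
of `K` equal or adjacent to it. Since the image lies in the clique `K`, any two images are equal
or adjacent, and a vertex outside `K` is missed. A connected graph on two vertices is dominated by
either vertex. On three or four vertices some edge dominates: if an edge `ab` does not, a vertex
`t` outside its closed neighbourhood has a neighbour `s` adjacent to `a` or `b`, say to `a`, and
then `a, b, s, t` are all the vertices, so the edge `as` dominates.
-/

namespace SimpleGraph

variable {V : Type*} {G : SimpleGraph V}

def IsDominatingSet (G : SimpleGraph V) (K : Set V) : Prop :=
  ∀ x, ∃ k ∈ K, x = k ∨ G.Adj k x

theorem IsClique.reducible_of_isDominatingSet {K : Set V} (hK : G.IsClique K)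
    (hdom : G.IsDominatingSet K) {z : V} (hz : z ∉ K) : G.Reducible := by
  choose f hfK hf using hdom
  refine ⟨f, fun hsurj => ?_, fun x => ?_, fun x y _ => ?_⟩
  · obtain ⟨x, rfl⟩ := hsurj z
    exact hz (hfK x)
  · exact (hf x).imp Eq.symm id
  · by_cases hxy : f x = f y
    · exact Or.inl hxy
    · exact Or.inr (hK (hfK x) (hfK y) hxy)

theorem isDominatingSet_singleton_of_card_eq_two [Fintype V] (hcard : Fintype.card V = 2)
    {a b : V} (hab : G.Adj a b) : G.IsDominatingSet {a} := by
  classical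
  have hcover : ({a, b} : Finset V) = Finset.univ :=
    Finset.eq_univ_of_card _ (by rw [Finset.card_pair hab.ne, hcard])
  intro x
  have hx : x ∈ ({a, b} : Finset V) := hcover ▸ Finset.mem_univ x
  simp only [Finset.mem_insert, Finset.mem_singleton] at hx
  rcases hx with rfl | rfl
  · exact ⟨x, rfl, Or.inl rfl⟩
  · exact ⟨a, rfl, Or.inr hab⟩

theorem isDominatingSet_pair_of_card_le_four [Fintype V] (hcard : Fintype.card V ≤ 4)
    {a b s t : V} (hab : G.Adj a b) (has : G.Adj a s) (hst : G.Adj s t)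
    (hsb : s ≠ b) (hta : t ≠ a) (htb : t ≠ b) : G.IsDominatingSet {a, s} := by
  classical
  have hcover : ({a, b, s, t} : Finset V) = Finset.univ := by
    refine Finset.eq_univ_of_card _ (le_antisymm (Finset.card_le_univ _) ?_)
    rw [Finset.card_insert_of_notMem, Finset.card_insert_of_notMem, Finset.card_pair hst.ne]
    · exact hcard
    · simp [hsb.symm, htb.symm]
    · simp [hab.ne, has.ne, hta.symm]
  intro x
  have hx : x ∈ ({a, b, s, t} : Finset V) := hcover ▸ Finset.mem_univ x
  simp only [Finset.mem_insert, Finset.mem_singleton] at hx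
  rcases hx with rfl | rfl | rfl | rfl
  · exact ⟨x, by simp, Or.inl rfl⟩
  · exact ⟨a, by simp, Or.inr hab⟩
  · exact ⟨x, by simp, Or.inl rfl⟩
  · exact ⟨s, by simp, Or.inr hst⟩

theorem Connected.exists_adj_isDominatingSet_pair [Fintype V] (hconn : G.Connected)
    (hcard : Fintype.card V ≤ 4) {a b : V} (hab : G.Adj a b) :
    ∃ u v, G.Adj u v ∧ G.IsDominatingSet {u, v} := by
  by_cases hD : G.IsDominatingSet {a, b}
  · exact ⟨a, b, hab, hD⟩
  obtain ⟨r, hr⟩ := not_forall.1 hD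
  set D : Set V := {x | ∃ k ∈ ({a, b} : Set V), x = k ∨ G.Adj k x}
  obtain ⟨⟨⟨s, t⟩, hst⟩, -, hsD, htD⟩ :=
    (hconn.preconnected a r).some.exists_boundary_dart D ⟨a, by simp, Or.inl rfl⟩ hr
  simp only [D, Set.mem_ofPred_eq, Set.mem_insert_iff, Set.mem_singleton_iff,
    exists_eq_or_imp, exists_eq_left, not_or] at hsD htD
  obtain ⟨⟨hta, hat⟩, htb, hbt⟩ := htD
  rcases hsD with (rfl | has) | (rfl | hbs)
  · exact absurd hst hat
  · exact ⟨a, s, has, isDominatingSet_pair_of_card_le_four hcard hab has hst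
      (by rintro rfl; exact hbt hst) hta htb⟩
  · exact absurd hst hbt
  · exact ⟨b, s, hbs, isDominatingSet_pair_of_card_le_four hcard hab.symm hbs hst
      (by rintro rfl; exact hat hst) htb hta⟩

end SimpleGraph

theorem small_connected_reducible {V : Type*} [Fintype V] (G : SimpleGraph V)
    (hconn : G.Connected)
    (hcard : Fintype.card V = 2 ∨ Fintype.card V = 3 ∨ Fintype.card V = 4) :
    G.Reducible := by
  classical
  have : Nontrivial V := Fintype.one_lt_card_iff_nontrivial.1 (by omega)
  obtain ⟨a⟩ := hconn.nonempty
  obtain ⟨b, hab⟩ := hconn.preconnected.exists_adj_of_nontrivial a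
  rcases hcard with hcard | hcard
  · exact (SimpleGraph.isClique_singleton a).reducible_of_isDominatingSet
      (SimpleGraph.isDominatingSet_singleton_of_card_eq_two hcard hab) (z := b)
      (by simpa using hab.ne')
  · obtain ⟨u, v, huv, hdom⟩ := hconn.exists_adj_isDominatingSet_pair (by omega) hab
    obtain ⟨z, -, hz⟩ := Finset.exists_mem_notMem_of_card_lt_card (s := {u, v})
      (t := Finset.univ) (Finset.card_le_two.trans_lt (by rw [Finset.card_univ]; omega))
    exact (SimpleGraph.isClique_pair.2 fun _ => huv).reducible_of_isDominatingSet hdom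
      (z := z) (by simpa using hz)
end

section
/- Every reduction of the graph obtained from the 5-cycle on vertices 0,1,2,3,4 by adding a sixth vertex c adjacent exactly to vertices 0 and 2 moves every vertex: if f is a reduction of this graph, then f(x) ≠ x for all vertices x. -/
/-- 5-cycle with extra vertex `none` adjacent to 0 and 2. -/
def c5PlusVertex : SimpleGraph (Option (ZMod 5)) :=
  SimpleGraph.fromRel (fun x y =>
    match x, y with
    | some a, some b => b = a + 1
    | some a, none => a = 0 ∨ a = 2
    | none, _ => False)

instance : DecidableRel c5PlusVertex.Adj := fun x y =>
  match x, y with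
  | some a, some b =>
      inferInstanceAs (Decidable (some a ≠ some b ∧ (b = a + 1 ∨ a = b + 1)))
  | some a, none =>
      inferInstanceAs (Decidable (some a ≠ none ∧ ((a = 0 ∨ a = 2) ∨ False)))
  | none, some b =>
      inferInstanceAs (Decidable (none ≠ some b ∧ (False ∨ (b = 0 ∨ b = 2))))
  | none, none =>
      inferInstanceAs (Decidable ((none : Option (ZMod 5)) ≠ none ∧ (False ∨ False)))

set_option maxHeartbeats 4000000 in
set_option synthInstance.maxHeartbeats 1000000 in
set_option synthInstance.maxSize 2000 in
lemma c5PlusVertex_key :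
    ∀ a b c2 d e g : Option (ZMod 5),
    (a = some 0 ∨ c5PlusVertex.Adj a (some 0)) →
    (b = some 1 ∨ c5PlusVertex.Adj b (some 1)) →
    (c2 = some 2 ∨ c5PlusVertex.Adj c2 (some 2)) →
    (d = some 3 ∨ c5PlusVertex.Adj d (some 3)) →
    (e = some 4 ∨ c5PlusVertex.Adj e (some 4)) →
    (g = none ∨ c5PlusVertex.Adj g none) →
    (a = b ∨ c5PlusVertex.Adj a b) →
    (b = c2 ∨ c5PlusVertex.Adj b c2) →
    (c2 = d ∨ c5PlusVertex.Adj c2 d) →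
    (d = e ∨ c5PlusVertex.Adj d e) →
    (e = a ∨ c5PlusVertex.Adj e a) →
    (g = a ∨ c5PlusVertex.Adj g a) →
    (g = c2 ∨ c5PlusVertex.Adj g c2) →
    (a = some 0 ∨ b = some 1 ∨ c2 = some 2 ∨ d = some 3 ∨ e = some 4 ∨ g = none) →
    ∀ v : Option (ZMod 5), v = a ∨ v = b ∨ v = c2 ∨ v = d ∨ v = e ∨ v = g := by
  decide

theorem c5PlusVertex_reduction_moves_all (f : Option (ZMod 5) → Option (ZMod 5))
    (hf : c5PlusVertex.IsReduction f) :
    ∀ x, f x ≠ x := by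
  obtain ⟨hns, hN, hE⟩ := hf
  intro x hx
  apply hns
  have hkey := c5PlusVertex_key (f (some 0)) (f (some 1)) (f (some 2)) (f (some 3))
    (f (some 4)) (f none)
    (hN (some 0)) (hN (some 1)) (hN (some 2)) (hN (some 3)) (hN (some 4)) (hN none)
    (hE (some 0) (some 1) (Or.inr (by decide)))
    (hE (some 1) (some 2) (Or.inr (by decide)))
    (hE (some 2) (some 3) (Or.inr (by decide)))
    (hE (some 3) (some 4) (Or.inr (by decide)))
    (hE (some 4) (some 0) (Or.inr (by decide)))
    (hE none (some 0) (Or.inr (by decide)))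
    (hE none (some 2) (Or.inr (by decide)))
    ?_
  · intro y
    rcases hkey y with h | h | h | h | h | h
    exacts [⟨some 0, h.symm⟩, ⟨some 1, h.symm⟩, ⟨some 2, h.symm⟩, ⟨some 3, h.symm⟩,
      ⟨some 4, h.symm⟩, ⟨none, h.symm⟩]
  · rcases x with _ | a
    · exact Or.inr (Or.inr (Or.inr (Or.inr (Or.inr hx))))
    · fin_cases a
      exacts [Or.inl hx, Or.inr (Or.inl hx), Or.inr (Or.inr (Or.inl hx)),
        Or.inr (Or.inr (Or.inr (Or.inl hx))),
        Or.inr (Or.inr (Or.inr (Or.inr (Or.inl hx))))]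
end
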